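/- arXiv:1911.08238 — 2 statements merged into one kernel-verified Lean document; each statement's English description precedes it below -/
import Mathlib

section
/- Let (B, L, θ) be a Boolean dynamical system, η an ultrafilter of B, and α ∈ L*. Then the set θ̂_α(η) := {A ∈ B : θ_α(A) ∈ η} is an ultrafilter if and only if α = ∅ or R_α ∈ η. -/
/-- An ideal of a (generalized) Boolean algebra: a non-empty subset closed under
union and under intersection with arbitrary elements. -/
def IsBoolIdeal {B : Type*} [GeneralizedBooleanAlgebra B] (I : Set B) : Prop :=
  I.Nonempty ∧ (∀ a ∈ I, ∀ b ∈ I, a ⊔ b ∈ I) ∧ (∀ a ∈ I, ∀ b : B, a ⊓ b ∈ I)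

/-- A filter in a (generalized) Boolean algebra. -/
def IsBoolFilter {B : Type*} [GeneralizedBooleanAlgebra B] (ξ : Set B) : Prop :=
  ξ.Nonempty ∧ ⊥ ∉ ξ ∧ (∀ a ∈ ξ, ∀ b : B, a ≤ b → b ∈ ξ) ∧ (∀ a ∈ ξ, ∀ b ∈ ξ, a ⊓ b ∈ ξ)

/-- An ultrafilter of a (generalized) Boolean algebra. -/
def IsBoolUltrafilter {B : Type*} [GeneralizedBooleanAlgebra B] (ξ : Set B) : Prop :=
  IsBoolFilter ξ ∧ ∀ a ∈ ξ, ∀ b b' : B, a = b ⊔ b' → b ∈ ξ ∨ b' ∈ ξ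

/-- The relation `A ~ B ⟺ A ∪ A' = B ∪ B'` for some `A', B' ∈ I`. -/
def relI {B : Type*} [GeneralizedBooleanAlgebra B] (I : Set B) (a b : B) : Prop :=
  ∃ a' ∈ I, ∃ b' ∈ I, a ⊔ a' = b ⊔ b'

/-- The action of a finite word `α ∈ L*`: `θ_α = θ_{α_n} ∘ ⋯ ∘ θ_{α_1}`. -/
def wordAct {B L : Type*} (θ : L → B → B) (α : List L) (A : B) : B :=
  α.foldl (fun x a => θ a x) A

/-- `α^k`: the word `α` concatenated with itself `k` times. -/
def wordPow {L : Type*} (α : List L) (k : ℕ) : List L := (List.replicate k α).flatten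

/-- A Boolean dynamical system: a Boolean algebra `B`, a set `L`, and actions
`θ_a` on `B` (Boolean homomorphisms with `θ_a ⊥ = ⊥`) such that each word
action has compact range and closed domain. -/
structure BoolDynSys (B L : Type*) [GeneralizedBooleanAlgebra B] where
  θ : L → B → B
  map_inf : ∀ (a : L) (A A' : B), θ a (A ⊓ A') = θ a A ⊓ θ a A'
  map_sup : ∀ (a : L) (A A' : B), θ a (A ⊔ A') = θ a A ⊔ θ a A'
  map_sdiff : ∀ (a : L) (A A' : B), θ a (A \ A') = θ a A \ θ a A'
  map_bot : ∀ a : L, θ a ⊥ = ⊥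
  compactRange : ∀ α : List L, α ≠ [] → ∃ R : B, IsLUB (Set.range (wordAct θ α)) R
  closedDomain : ∀ α : List L, α ≠ [] → ∀ R : B, IsLUB (Set.range (wordAct θ α)) R →
      ∃ D : B, wordAct θ α D = R

section BDS
variable {B L : Type*} [GeneralizedBooleanAlgebra B]

/-- `Δ_A = {a ∈ L : θ_a(A) ≠ ∅}`. -/
def DeltaSet (S : BoolDynSys B L) (A : B) : Set L := {a : L | S.θ a A ≠ ⊥}

/-- `A` is regular if every non-empty `C ⊆ A` has `0 < |Δ_C| < ∞`. -/
def RegularElt (S : BoolDynSys B L) (A : B) : Prop :=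
  ∀ C : B, C ≤ A → C ≠ ⊥ → (DeltaSet S C).Finite ∧ (DeltaSet S C).Nonempty

/-- An ultrafilter cycle `(α, η)`: `θ_α(A) ∈ η` for all `A ∈ η`. -/
def IsUFCycle (S : BoolDynSys B L) (α : List L) (η : Set B) : Prop :=
  α ≠ [] ∧ IsBoolUltrafilter η ∧ ∀ A ∈ η, wordAct S.θ α A ∈ η

/-- A cycle `(α, A)`: `θ_α(C) = C` for all `C ⊆ A`. -/
def IsCycle (S : BoolDynSys B L) (α : List L) (A : B) : Prop :=
  α ≠ [] ∧ A ≠ ⊥ ∧ ∀ C : B, C ≤ A → wordAct S.θ α C = C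

/-- The cycle `(α, A)` has no exits: for all `t ≤ |α|` and all non-empty
`C ⊆ θ_{α₁⋯α_t}(A)`, `C` is regular with `Δ_C = {α_{t+1}}` (indices mod `|α|`). -/
def NoExits (S : BoolDynSys B L) (α : List L) (A : B) : Prop :=
  ∀ t : ℕ, ∀ _h1 : 1 ≤ t, ∀ h2 : t ≤ α.length, ∀ C : B, C ≠ ⊥ →
    C ≤ wordAct S.θ (α.take t) A →
    RegularElt S C ∧
      DeltaSet S C = {α.get ⟨t % α.length, Nat.mod_lt t (Nat.lt_of_lt_of_le _h1 h2)⟩}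

/-- The cycle `(α, A)` has an exit. -/
def HasExit (S : BoolDynSys B L) (α : List L) (A : B) : Prop :=
  ∃ t : ℕ, ∃ _h1 : 1 ≤ t, ∃ h2 : t ≤ α.length, ∃ C : B, C ≠ ⊥ ∧
    C ≤ wordAct S.θ (α.take t) A ∧
    DeltaSet S C ≠ {α.get ⟨t % α.length, Nat.mod_lt t (Nat.lt_of_lt_of_le _h1 h2)⟩}

/-- Condition (L): every cycle has an exit. -/
def ConditionL (S : BoolDynSys B L) : Prop :=
  ∀ (α : List L) (A : B), IsCycle S α A → HasExit S α A

/-- A hereditary subset: closed under the actions. -/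
def IsHereditary (S : BoolDynSys B L) (H : Set B) : Prop :=
  ∀ A ∈ H, ∀ a : L, S.θ a A ∈ H

/-- A saturated subset: `A ∈ H` whenever `A` is regular and `θ_a(A) ∈ H` for all `a`. -/
def IsSaturated (S : BoolDynSys B L) (H : Set B) : Prop :=
  ∀ A : B, RegularElt S A → (∀ a : L, S.θ a A ∈ H) → A ∈ H

/-- A maximal tail: conditions (T0)–(T5). -/
def IsMaximalTail (S : BoolDynSys B L) (T : Set B) : Prop :=
  T.Nonempty ∧
  (⊥ ∉ T) ∧
  (∀ A : B, ∀ a : L, S.θ a A ∈ T → A ∈ T) ∧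
  (∀ A C : B, A ⊔ C ∈ T → A ∈ T ∨ C ∈ T) ∧
  (∀ A ∈ T, ∀ C : B, A ≤ C → C ∈ T) ∧
  (∀ A ∈ T, RegularElt S A → ∃ a : L, S.θ a A ∈ T) ∧
  (∀ A₁ ∈ T, ∀ A₂ ∈ T, ∃ C ∈ T,
      (∃ α : List L, C ≤ wordAct S.θ α A₁) ∧ (∃ β : List L, C ≤ wordAct S.θ β A₂))

/-- A cyclic maximal tail. -/
def IsCyclicMaximalTail (S : BoolDynSys B L) (T : Set B) : Prop :=
  IsMaximalTail S T ∧
  ∃ (α : List L) (η : Set B) (A : B), IsUFCycle S α η ∧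
    T = {C : B | ∃ β : List L, wordAct S.θ β C ∈ η} ∧ A ∈ η ∧
    ∀ β : List L, β ≠ [] → ∀ C : B, C ≤ A → wordAct S.θ β C ∈ η →
      C ∈ η ∧ ∃ k : ℕ, 0 < k ∧ β = wordPow α k

/-- Condition (K). -/
def ConditionK (S : BoolDynSys B L) : Prop :=
  ¬ ∃ (α : List L) (η : Set B) (A : B), IsUFCycle S α η ∧ A ∈ η ∧
    ∀ β : List L, β ≠ [] → ∀ C : B, C ≤ A → wordAct S.θ β C ∈ η →
      C ∈ η ∧ ∃ k : ℕ, 0 < k ∧ β = wordPow α k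

/-! Notions for the quotient Boolean dynamical system `(B/H, L, θ)` (for a
hereditary saturated ideal `H`), expressed in terms of representatives in `B`. -/

/-- `[C] ⊆ [B']` in `B/H`. -/
def qle (H : Set B) (C A : B) : Prop := ∃ W ∈ H, C ≤ A ⊔ W

/-- `Δ_{[C]}` in `B/H`. -/
def QDelta (S : BoolDynSys B L) (H : Set B) (C : B) : Set L := {a : L | S.θ a C ∉ H}

/-- `[A]` is regular in `B/H`. -/
def QRegular (S : BoolDynSys B L) (H : Set B) (A : B) : Prop :=
  ∀ C : B, C ∉ H → qle H C A → (QDelta S H C).Finite ∧ (QDelta S H C).Nonempty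

/-- `(α, [A])` is a cycle in the quotient `(B/H, L, θ)`. -/
def QCycle (S : BoolDynSys B L) (H : Set B) (α : List L) (A : B) : Prop :=
  α ≠ [] ∧ A ∉ H ∧ ∀ C : B, qle H C A → relI H (wordAct S.θ α C) C

/-- The cycle `(α, [A])` has an exit in the quotient `(B/H, L, θ)`. -/
def QHasExit (S : BoolDynSys B L) (H : Set B) (α : List L) (A : B) : Prop :=
  ∃ t : ℕ, ∃ _h1 : 1 ≤ t, ∃ h2 : t ≤ α.length, ∃ C : B, C ∉ H ∧
    qle H C (wordAct S.θ (α.take t) A) ∧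
    QDelta S H C ≠ {α.get ⟨t % α.length, Nat.mod_lt t (Nat.lt_of_lt_of_le _h1 h2)⟩}

/-- The quotient `(B/H, L, θ)` satisfies Condition (L). -/
def QConditionL (S : BoolDynSys B L) (H : Set B) : Prop :=
  ∀ (α : List L) (A : B), QCycle S H α A → QHasExit S H α A

end BDS

lemma wordAct_sup' {B L : Type*} [GeneralizedBooleanAlgebra B] (S : BoolDynSys B L)
    (α : List L) (A A' : B) :
    wordAct S.θ α (A ⊔ A') = wordAct S.θ α A ⊔ wordAct S.θ α A' := by
  induction α generalizing A A' with
  | nil => rfl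
  | cons a α ih => simp only [wordAct, List.foldl_cons] at *; rw [S.map_sup, ih]

lemma wordAct_inf' {B L : Type*} [GeneralizedBooleanAlgebra B] (S : BoolDynSys B L)
    (α : List L) (A A' : B) :
    wordAct S.θ α (A ⊓ A') = wordAct S.θ α A ⊓ wordAct S.θ α A' := by
  induction α generalizing A A' with
  | nil => rfl
  | cons a α ih => simp only [wordAct, List.foldl_cons] at *; rw [S.map_inf, ih]

lemma wordAct_bot' {B L : Type*} [GeneralizedBooleanAlgebra B] (S : BoolDynSys B L)
    (α : List L) : wordAct S.θ α (⊥ : B) = ⊥ := by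
  induction α with
  | nil => rfl
  | cons a α ih => simp only [wordAct, List.foldl_cons] at *; rw [S.map_bot, ih]

lemma wordAct_mono' {B L : Type*} [GeneralizedBooleanAlgebra B] (S : BoolDynSys B L)
    (α : List L) {A A' : B} (h : A ≤ A') : wordAct S.θ α A ≤ wordAct S.θ α A' := by
  have := wordAct_sup' S α A A'
  rw [sup_eq_right.mpr h] at this
  rw [this]; exact le_sup_left

/-- Let `(B, L, θ)` be a Boolean dynamical system, `η` an ultrafilter of `B`, and
`α ∈ L*`. Then `θ̂_α(η) = {A : θ_α(A) ∈ η}` is an ultrafilter if and only if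
`α = ∅` or `R_α ∈ η`. -/
theorem hat_theta_ultrafilter_iff {B L : Type*} [GeneralizedBooleanAlgebra B]
    (S : BoolDynSys B L) (η : Set B) (hη : IsBoolUltrafilter η) (α : List L) :
    IsBoolUltrafilter {A : B | wordAct S.θ α A ∈ η} ↔
      (α = [] ∨ ∃ R : B, IsLUB (Set.range (wordAct S.θ α)) R ∧ R ∈ η) := by
  constructor
  · intro h
    by_cases hα : α = []
    · exact Or.inl hα
    · right
      obtain ⟨R, hR⟩ := S.compactRange α hα
      refine ⟨R, hR, ?_⟩
      obtain ⟨A, hA⟩ := h.1.1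
      exact hη.1.2.2.1 _ hA R (hR.1 (Set.mem_range_self A))
  · intro h
    by_cases hα : α = []
    · subst hα
      simpa only [wordAct, List.foldl_nil, Set.setOf_mem_eq] using hη
    · obtain ⟨R, hR, hRη⟩ := h.resolve_left hα
      obtain ⟨D, hD⟩ := S.closedDomain α hα R hR
      refine ⟨⟨⟨D, by simpa [Set.mem_setOf_eq, hD] using hRη⟩, ?_, ?_, ?_⟩, ?_⟩
      · simp only [Set.mem_setOf_eq, wordAct_bot']
        exact hη.1.2.1
      · intro a ha b hab
        exact hη.1.2.2.1 _ ha _ (wordAct_mono' S α hab)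
      · intro a ha b hb
        simp only [Set.mem_setOf_eq, wordAct_inf']
        exact hη.1.2.2.2 _ ha _ hb
      · intro a ha b b' heq
        have : wordAct S.θ α a = wordAct S.θ α b ⊔ wordAct S.θ α b' := by
          rw [heq, wordAct_sup']
        exact hη.2 _ ha _ _ this
end

section
/- Let (B, L, θ) be a Boolean dynamical system, (α, η) an ultrafilter cycle, and A ∈ η such that whenever β ∈ L* \ {∅}, B ⊆ A, and θ_β(B) ∈ η, then B ∈ η and β = α^k for some k ∈ ℕ. Then T := {B ∈ B : θ_β(B) ∈ η for some β ∈ L*} is a maximal tail. -/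
/-!
`T` is the preimage of `η` under all word actions. Word actions preserve `⊥` and `⊔`, so the
filter and ultrafilter properties of `η` pass to `T`, and two elements of `T` have the meet
of their images in `η` as a common descendant. For the successor condition, if
`θ_β(C) ∈ η` then `θ_{βα}(C) = θ_α(θ_β(C)) ∈ η` because `(α, η)` is a cycle, and the first
letter of the non-empty word `βα` is the required successor.
-/

theorem wordAct_append {B L : Type*} (θ : L → B → B) (β γ : List L) (A : B) :
    wordAct θ (β ++ γ) A = wordAct θ γ (wordAct θ β A) :=
  List.foldl_append

namespace BoolDynSys

variable {B L : Type*} [GeneralizedBooleanAlgebra B] (S : BoolDynSys B L)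

theorem wordAct_bot (β : List L) : wordAct S.θ β (⊥ : B) = ⊥ := by
  induction β with
  | nil => rfl
  | cons a β ih => simpa only [wordAct, List.foldl_cons, S.map_bot] using ih

theorem wordAct_sup (β : List L) (A C : B) :
    wordAct S.θ β (A ⊔ C) = wordAct S.θ β A ⊔ wordAct S.θ β C := by
  induction β generalizing A C with
  | nil => rfl
  | cons a β ih => simpa only [wordAct, List.foldl_cons, S.map_sup] using ih _ _

theorem wordAct_mono (β : List L) {A C : B} (hAC : A ≤ C) :
    wordAct S.θ β A ≤ wordAct S.θ β C := by
  rw [← sup_eq_right.mpr hAC, S.wordAct_sup]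
  exact le_sup_left

def tail (η : Set B) : Set B := {C : B | ∃ β : List L, wordAct S.θ β C ∈ η}

variable {S} {η : Set B}

theorem subset_tail : η ⊆ S.tail η := fun _ hC => ⟨[], hC⟩

theorem mem_tail_of_θ_mem_tail {A : B} {a : L} (h : S.θ a A ∈ S.tail η) : A ∈ S.tail η :=
  let ⟨β, hβ⟩ := h
  ⟨a :: β, hβ⟩

theorem bot_notMem_tail (hη : IsBoolFilter η) : ⊥ ∉ S.tail η := by
  rintro ⟨β, hβ⟩
  rw [S.wordAct_bot] at hβ
  exact hη.2.1 hβ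

theorem mem_tail_of_le (hη : IsBoolFilter η) {A C : B} (hA : A ∈ S.tail η) (hAC : A ≤ C) :
    C ∈ S.tail η :=
  let ⟨β, hβ⟩ := hA
  ⟨β, hη.2.2.1 _ hβ _ (S.wordAct_mono β hAC)⟩

theorem mem_or_mem_of_sup_mem_tail (hη : IsBoolUltrafilter η) {A C : B}
    (h : A ⊔ C ∈ S.tail η) : A ∈ S.tail η ∨ C ∈ S.tail η := by
  obtain ⟨β, hβ⟩ := h
  rw [S.wordAct_sup] at hβ
  exact (hη.2 _ hβ _ _ rfl).imp (⟨β, ·⟩) (⟨β, ·⟩)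

theorem exists_common_descendant (hη : IsBoolFilter η) {A₁ A₂ : B}
    (h₁ : A₁ ∈ S.tail η) (h₂ : A₂ ∈ S.tail η) :
    ∃ C ∈ S.tail η, (∃ β : List L, C ≤ wordAct S.θ β A₁) ∧
      ∃ γ : List L, C ≤ wordAct S.θ γ A₂ := by
  obtain ⟨β, hβ⟩ := h₁
  obtain ⟨γ, hγ⟩ := h₂
  exact ⟨_, subset_tail (hη.2.2.2 _ hβ _ hγ), ⟨β, inf_le_left⟩, ⟨γ, inf_le_right⟩⟩

end BoolDynSys

namespace IsUFCycle

open BoolDynSys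

variable {B L : Type*} [GeneralizedBooleanAlgebra B] {S : BoolDynSys B L} {η : Set B}

theorem exists_θ_mem_tail {α : List L} (h : IsUFCycle S α η) {A : B}
    (hA : A ∈ S.tail η) : ∃ a : L, S.θ a A ∈ S.tail η := by
  obtain ⟨β, hβ⟩ := hA
  have hβα : wordAct S.θ (β ++ α) A ∈ η := by
    rw [wordAct_append]
    exact h.2.2 _ hβ
  obtain ⟨a, γ, hcons⟩ :=
    List.ne_nil_iff_exists_cons.mp (List.append_ne_nil_of_right_ne_nil β h.1)
  rw [hcons] at hβα
  exact ⟨a, γ, hβα⟩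

theorem isMaximalTail_tail {α : List L} (h : IsUFCycle S α η) :
    IsMaximalTail S (S.tail η) :=
  have hη := h.2.1
  ⟨hη.1.1.mono subset_tail, bot_notMem_tail hη.1, fun _ _ => mem_tail_of_θ_mem_tail,
    fun _ _ => mem_or_mem_of_sup_mem_tail hη, fun _ hA _ => mem_tail_of_le hη.1 hA,
    fun _ hA _ => h.exists_θ_mem_tail hA, fun _ h₁ _ h₂ => exists_common_descendant hη.1 h₁ h₂⟩

end IsUFCycle

theorem cyclic_tail_is_maximal_tail_general {B L : Type*} [GeneralizedBooleanAlgebra B]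
    (S : BoolDynSys B L) (α : List L) (η : Set B)
    (h : IsUFCycle S α η) :
    IsMaximalTail S {C : B | ∃ β : List L, wordAct S.θ β C ∈ η} :=
  h.isMaximalTail_tail

/-- Let `(α, η)` be an ultrafilter cycle and `A ∈ η` such that whenever
`β ∈ L* \ {∅}`, `B' ⊆ A`, and `θ_β(B') ∈ η`, then `B' ∈ η` and `β = α^k` for some
`k ∈ ℕ`. Then `T = {B' : θ_β(B') ∈ η for some β ∈ L*}` is a maximal tail. -/
theorem cyclic_tail_is_maximal_tail {B L : Type*} [GeneralizedBooleanAlgebra B]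
    (S : BoolDynSys B L) (α : List L) (η : Set B) (A : B)
    (h : IsUFCycle S α η) (hA : A ∈ η)
    (hmin : ∀ β : List L, β ≠ [] → ∀ C : B, C ≤ A → wordAct S.θ β C ∈ η →
      C ∈ η ∧ ∃ k : ℕ, 0 < k ∧ β = wordPow α k) :
    IsMaximalTail S {C : B | ∃ β : List L, wordAct S.θ β C ∈ η} :=
  cyclic_tail_is_maximal_tail_general S α η h
end
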